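/- (Telescoping estimate) Let 0 < β < α < mn, 0 < p₀ < n/α, and f⃗ with ‖f⃗‖_{M^{P⃗,p₀}} = 1. Then for every dyadic cube Q and every x ∈ Q, |I_α^D(f⃗)(x)| ≲ ℓ_Q^{α−β} M_β^D(f⃗)(x) + ℓ_Q^{α−n/p₀}, with implicit constant independent of Q, x, f⃗. -/

import Mathlib

open MeasureTheory ENNReal

noncomputable section

variable {n : ℕ}

/-- Axis-parallel cube with lower corner `a` and side length `r` (half-open). -/
def cube (a : Fin n → ℝ) (r : ℝ) : Set (Fin n → ℝ) :=
  {y | ∀ i, a i ≤ y i ∧ y i < a i + r}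

/-- The dyadic cube `2^{-k}(m + [0,1)^n)`. -/
def dyadicCube (k : ℤ) (mv : Fin n → ℤ) : Set (Fin n → ℝ) :=
  cube (fun i => (mv i : ℝ) * (2 : ℝ) ^ (-k)) ((2 : ℝ) ^ (-k))

/-- The concentric triple `3Q` of the cube with corner `a` and side `r`. -/
def tripleCube (a : Fin n → ℝ) (r : ℝ) : Set (Fin n → ℝ) :=
  cube (fun i => a i - r) (3 * r)

/-- The Morrey norm `‖f‖_{M^{p,p₀}}`. -/
def morreyNorm (p p0 : ℝ) (f : (Fin n → ℝ) → ℝ) : ℝ≥0∞ :=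
  ⨆ (a : Fin n → ℝ) (r : ℝ) (_ : 0 < r),
    volume (cube a r) ^ (1 / p0 - 1 / p) *
      (∫⁻ x in cube a r, ENNReal.ofReal |f x| ^ p) ^ (1 / p)

/-- The product Morrey norm `‖f⃗‖_{M^{P⃗,p₀}}`. -/
def prodMorreyNorm {m : ℕ} (P : Fin m → ℝ) (p p0 : ℝ)
    (f : Fin m → (Fin n → ℝ) → ℝ) : ℝ≥0∞ :=
  ⨆ (a : Fin n → ℝ) (r : ℝ) (_ : 0 < r),
    volume (cube a r) ^ (1 / p0 - 1 / p) *
      ∏ j, (∫⁻ x in cube a r, ENNReal.ofReal |f j x| ^ P j) ^ (1 / P j)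

/-- The Radon–Morrey norm `‖g‖_{M_μ^{q,q₀}}`. -/
def radonMorreyNorm (μ : Measure (Fin n → ℝ)) (q q0 : ℝ)
    (g : (Fin n → ℝ) → ℝ≥0∞) : ℝ≥0∞ :=
  ⨆ (a : Fin n → ℝ) (r : ℝ) (_ : 0 < r),
    volume (cube a r) ^ (1 / q0 - 1 / q) * (∫⁻ x in cube a r, g x ^ q ∂μ) ^ (1 / q)

/-- The growth norm `‖μ‖_β := sup_Q μ(Q)/ℓ_Q^β`. -/
def measureGrowthNorm (μ : Measure (Fin n → ℝ)) (β : ℝ) : ℝ≥0∞ :=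
  ⨆ (a : Fin n → ℝ) (r : ℝ) (_ : 0 < r), μ (cube a r) / ENNReal.ofReal r ^ β

/-- The `m`-sublinear fractional maximal operator `𝔐_α`. -/
def fracMaximal {m : ℕ} (α : ℝ) (f : Fin m → (Fin n → ℝ) → ℝ)
    (x : Fin n → ℝ) : ℝ≥0∞ :=
  ⨆ (a : Fin n → ℝ) (r : ℝ) (_ : 0 < r) (_ : x ∈ cube a r),
    ENNReal.ofReal r ^ (α - (m : ℝ) * n) *
      ∏ j, ∫⁻ y in cube a r, ENNReal.ofReal |f j y|

/-- The dyadic `m`-sublinear fractional maximal operator `𝔐_α^𝒟`. -/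
def dyadicFracMaximal {m : ℕ} (α : ℝ) (f : Fin m → (Fin n → ℝ) → ℝ)
    (x : Fin n → ℝ) : ℝ≥0∞ :=
  ⨆ (k : ℤ) (mv : Fin n → ℤ) (_ : x ∈ dyadicCube k mv),
    ENNReal.ofReal ((2 : ℝ) ^ (-k)) ^ (α - (m : ℝ) * n) *
      ∏ j, ∫⁻ y in dyadicCube k mv, ENNReal.ofReal |f j y|

/-- The dyadic `m`-linear fractional integral operator `ℑ_α^𝒟`. -/
def dyadicFracIntegral {m : ℕ} (α : ℝ) (f : Fin m → (Fin n → ℝ) → ℝ)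
    (x : Fin n → ℝ) : ℝ≥0∞ :=
  ∑' qk : ℤ × (Fin n → ℤ),
    (dyadicCube qk.1 qk.2).indicator
      (fun _ => ENNReal.ofReal ((2 : ℝ) ^ (-qk.1)) ^ (α - (m : ℝ) * n) *
        ∏ j, ∫⁻ y in dyadicCube qk.1 qk.2, ENNReal.ofReal |f j y|) x

/-- The `m`-linear fractional integral operator `ℑ_α` (with Euclidean distances). -/
def fracIntegral {m : ℕ} (α : ℝ) (f : Fin m → (Fin n → ℝ) → ℝ)
    (x : Fin n → ℝ) : ℝ≥0∞ :=
  ∫⁻ y : Fin m → Fin n → ℝ,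
    (∏ j, ENNReal.ofReal |f j (y j)|) /
      ENNReal.ofReal ((∑ j, Real.sqrt (∑ i, (x i - y j i) ^ 2)) ^ ((m : ℝ) * n - α))


/-! The sum defining `ℑ_α^𝒟 f⃗ (x)` runs over the chain of dyadic cubes containing `x`, one per
generation `j`. For cubes inside `Q` (`j ≥ k`) the factor `ℓ^{α-mn}` is `ℓ^{α-β} · ℓ^{β-mn}`, and
the second factor times the averages is at most `𝔐_β^𝒟 f⃗ (x)`; since `α > β`, these terms sum
geometrically to `≲ ℓ_Q^{α-β} 𝔐_β^𝒟 f⃗ (x)`. For cubes containing `Q` (`j < k`), Hölder's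
inequality and the Morrey normalisation bound each term by `ℓ^{α-n/p₀}`; since `α < n/p₀`, these
sum geometrically to `≲ ℓ_Q^{α-n/p₀}`. -/

/-- No measurability of `g` is needed: Hölder is applied to a measurable minorant of `g` with
the same integral. -/
theorem lintegral_le_lintegral_rpow_mul_measure_univ {γ : Type*} [MeasurableSpace γ]
    (μ : Measure γ) (g : γ → ℝ≥0∞) {p : ℝ} (hp : 1 < p) :
    ∫⁻ a, g a ∂μ ≤ (∫⁻ a, g a ^ p ∂μ) ^ (1 / p) * μ Set.univ ^ (1 - 1 / p) := by
  obtain ⟨φ, hφm, hφle, hφeq⟩ := exists_measurable_le_lintegral_eq μ g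
  have hpq : p.HolderConjugate (p / (p - 1)) := Real.HolderConjugate.conjExponent hp
  have h := ENNReal.lintegral_mul_le_Lp_mul_Lq μ hpq hφm.aemeasurable
    (aemeasurable_const (b := (1 : ℝ≥0∞)))
  simp only [Pi.mul_apply, mul_one, ENNReal.one_rpow, lintegral_const, one_mul] at h
  have hexp : 1 / (p / (p - 1)) = 1 - 1 / p := by field_simp
  rw [hφeq, ← hexp]
  refine h.trans (mul_le_mul_left ?_ _)
  gcongr with a
  exact hφle a

theorem ENNReal.rpow_finset_sum {ι : Type*} {x : ℝ≥0∞} (hx : x ≠ 0) (hx' : x ≠ ⊤)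
    (s : Finset ι) (c : ι → ℝ) :
    x ^ (∑ i ∈ s, c i) = ∏ i ∈ s, x ^ c i := by
  classical
  induction s using Finset.cons_induction with
  | empty => simp
  | cons i s hi ih => rw [Finset.sum_cons, Finset.prod_cons, ENNReal.rpow_add _ _ hx hx', ih]

theorem prod_lintegral_le_prod_lintegral_rpow_mul_measure_univ {γ : Type*} [MeasurableSpace γ]
    {μ : Measure γ} (hμ : μ Set.univ ≠ 0) (hμ' : μ Set.univ ≠ ⊤) {m : ℕ} (g : Fin m → γ → ℝ≥0∞)
    {P : Fin m → ℝ} (hP : ∀ j, 1 < P j) {p : ℝ} (hp : 1 / p = ∑ j, 1 / P j) :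
    ∏ j, ∫⁻ a, g j a ∂μ ≤
      (∏ j, (∫⁻ a, g j a ^ P j ∂μ) ^ (1 / P j)) * μ Set.univ ^ ((m : ℝ) - 1 / p) := by
  calc ∏ j, ∫⁻ a, g j a ∂μ
      ≤ ∏ j, (∫⁻ a, g j a ^ P j ∂μ) ^ (1 / P j) * μ Set.univ ^ (1 - 1 / P j) :=
        Finset.prod_le_prod' fun j _ => lintegral_le_lintegral_rpow_mul_measure_univ μ _ (hP j)
    _ = _ := by
        rw [Finset.prod_mul_distrib, ← ENNReal.rpow_finset_sum hμ hμ', Finset.sum_sub_distrib,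
          ← hp]
        simp

theorem volume_cube (a : Fin n → ℝ) (r : ℝ) : volume (cube a r) = ENNReal.ofReal r ^ n := by
  have : cube a r = Set.univ.pi fun i => Set.Ico (a i) (a i + r) := by
    ext y
    simp [cube, Set.mem_pi]
  simp [this, volume_pi_pi, Real.volume_Ico]

theorem prod_lintegral_cube_le_of_prodMorreyNorm_le_one {m : ℕ} {P : Fin m → ℝ}
    (hP : ∀ j, 1 < P j) {p p0 : ℝ} (hp : 1 / p = ∑ j, 1 / P j) {f : Fin m → (Fin n → ℝ) → ℝ}
    (hf : prodMorreyNorm P p p0 f ≤ 1) (a : Fin n → ℝ) {r : ℝ} (hr : 0 < r) :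
    ∏ j, ∫⁻ y in cube a r, ENNReal.ofReal |f j y| ≤
      volume (cube a r) ^ ((m : ℝ) - 1 / p0) := by
  set vol := volume (cube a r)
  have hvol0 : vol ≠ 0 := by simp [vol, volume_cube, hr]
  have hvolt : vol ≠ ⊤ := by simp [vol, volume_cube]
  have hHolder := prod_lintegral_le_prod_lintegral_rpow_mul_measure_univ
    (μ := volume.restrict (cube a r)) (by simpa using hvol0) (by simpa using hvolt)
    (fun j y => ENNReal.ofReal |f j y|) hP hp
  rw [Measure.restrict_apply_univ] at hHolder
  have hMorrey : vol ^ (1 / p0 - 1 / p) *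
      ∏ j, (∫⁻ y in cube a r, ENNReal.ofReal |f j y| ^ P j) ^ (1 / P j) ≤ 1 := by
    refine le_trans ?_ hf
    exact le_iSup_of_le a (le_iSup_of_le r (le_iSup_of_le hr le_rfl))
  calc ∏ j, ∫⁻ y in cube a r, ENNReal.ofReal |f j y|
      ≤ vol ^ (1 / p - 1 / p0) * (vol ^ (1 / p0 - 1 / p) *
          ∏ j, (∫⁻ y in cube a r, ENNReal.ofReal |f j y| ^ P j) ^ (1 / P j)) *
          vol ^ ((m : ℝ) - 1 / p) := by
        rw [← mul_assoc, ← ENNReal.rpow_add _ _ hvol0 hvolt, sub_add_sub_cancel', sub_self,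
          ENNReal.rpow_zero, one_mul]
        exact hHolder
    _ ≤ vol ^ (1 / p - 1 / p0) * 1 * vol ^ ((m : ℝ) - 1 / p) := by gcongr
    _ = vol ^ ((m : ℝ) - 1 / p0) := by
        rw [mul_one, ← ENNReal.rpow_add _ _ hvol0 hvolt]
        ring_nf

/-- The integer corner of the dyadic cube of generation `k` containing `x`. -/
def dyadicIndex (x : Fin n → ℝ) (k : ℤ) : Fin n → ℤ := fun i => ⌊x i * (2 : ℝ) ^ k⌋

theorem mem_dyadicCube_iff {k : ℤ} {mv : Fin n → ℤ} {x : Fin n → ℝ} :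
    x ∈ dyadicCube k mv ↔ mv = dyadicIndex x k := by
  have hs : (0 : ℝ) < 2 ^ (-k) := zpow_pos two_pos _
  have hdiv : ∀ t : ℝ, t / 2 ^ (-k) = t * 2 ^ k := fun t => by rw [zpow_neg, div_inv_eq_mul]
  simp only [dyadicCube, cube, Set.mem_ofPred_eq, funext_iff, dyadicIndex, eq_comm (a := mv _),
    Int.floor_eq_iff]
  refine forall_congr' fun i => and_congr ?_ ?_
  · rw [← hdiv, le_div_iff₀ hs]
  · rw [← hdiv, div_lt_iff₀ hs, add_mul, one_mul]

theorem mem_dyadicCube_dyadicIndex (x : Fin n → ℝ) (k : ℤ) : x ∈ dyadicCube k (dyadicIndex x k) :=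
  mem_dyadicCube_iff.mpr rfl

/-- The term `ℓ_Q^{α-mn} ∏_j ∫_Q |f_j|` of the dyadic operators, for `Q = dyadicCube k mv`. -/
def dyadicTerm {m : ℕ} (α : ℝ) (f : Fin m → (Fin n → ℝ) → ℝ) (k : ℤ) (mv : Fin n → ℤ) : ℝ≥0∞ :=
  ENNReal.ofReal ((2 : ℝ) ^ (-k)) ^ (α - (m : ℝ) * n) *
    ∏ j, ∫⁻ y in dyadicCube k mv, ENNReal.ofReal |f j y|

theorem dyadicFracIntegral_eq_tsum {m : ℕ} (α : ℝ) (f : Fin m → (Fin n → ℝ) → ℝ)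
    (x : Fin n → ℝ) :
    dyadicFracIntegral α f x = ∑' k : ℤ, dyadicTerm α f k (dyadicIndex x k) := by
  rw [dyadicFracIntegral, ENNReal.tsum_prod']
  refine tsum_congr fun k => ?_
  rw [tsum_eq_single (dyadicIndex x k) fun mv hmv =>
    Set.indicator_of_notMem (fun hx => hmv (mem_dyadicCube_iff.mp hx)) _]
  exact Set.indicator_of_mem (mem_dyadicCube_dyadicIndex x k) _

theorem dyadicTerm_le_dyadicFracMaximal {m : ℕ} (β : ℝ) (f : Fin m → (Fin n → ℝ) → ℝ)
    {k : ℤ} {mv : Fin n → ℤ} {x : Fin n → ℝ} (hx : x ∈ dyadicCube k mv) :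
    dyadicTerm β f k mv ≤ dyadicFracMaximal β f x :=
  le_iSup_of_le k (le_iSup_of_le mv (le_iSup_of_le hx le_rfl))

theorem ofReal_two_zpow_neg_rpow (k : ℤ) (c : ℝ) :
    ENNReal.ofReal ((2 : ℝ) ^ (-k)) ^ c = (2 : ℝ≥0∞) ^ (-k * c) := by
  rw [← Real.rpow_intCast, ← ENNReal.ofReal_rpow_of_pos two_pos, ← ENNReal.rpow_mul]
  norm_num

theorem dyadicTerm_eq_two_rpow_mul_dyadicTerm {m : ℕ} (α β : ℝ) (f : Fin m → (Fin n → ℝ) → ℝ)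
    (k : ℤ) (mv : Fin n → ℤ) :
    dyadicTerm α f k mv = (2 : ℝ≥0∞) ^ (-k * (α - β)) * dyadicTerm β f k mv := by
  have h0 : ENNReal.ofReal ((2 : ℝ) ^ (-k)) ≠ 0 :=
    (ENNReal.ofReal_pos.mpr (zpow_pos two_pos _)).ne'
  rw [dyadicTerm, dyadicTerm, ← ofReal_two_zpow_neg_rpow, ← mul_assoc,
    ← ENNReal.rpow_add _ _ h0 ENNReal.ofReal_ne_top]
  ring_nf

theorem dyadicTerm_le_of_prodMorreyNorm_le_one {m : ℕ} {P : Fin m → ℝ} (hP : ∀ j, 1 < P j)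
    {p p0 : ℝ} (hp : 1 / p = ∑ j, 1 / P j) (α : ℝ) {f : Fin m → (Fin n → ℝ) → ℝ}
    (hf : prodMorreyNorm P p p0 f ≤ 1) (k : ℤ) (mv : Fin n → ℤ) :
    dyadicTerm α f k mv ≤ (2 : ℝ≥0∞) ^ (-k * (α - n / p0)) := by
  have hs : (0 : ℝ) < 2 ^ (-k) := zpow_pos two_pos _
  have h0 : ENNReal.ofReal ((2 : ℝ) ^ (-k)) ≠ 0 := (ENNReal.ofReal_pos.mpr hs).ne'
  calc dyadicTerm α f k mv
      ≤ ENNReal.ofReal ((2 : ℝ) ^ (-k)) ^ (α - (m : ℝ) * n) *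
          volume (dyadicCube k mv) ^ ((m : ℝ) - 1 / p0) :=
        mul_le_mul_right (prod_lintegral_cube_le_of_prodMorreyNorm_le_one hP hp hf _ hs) _
    _ = ENNReal.ofReal ((2 : ℝ) ^ (-k)) ^ (α - n / p0) := by
        rw [dyadicCube, volume_cube, ← ENNReal.rpow_natCast, ← ENNReal.rpow_mul,
          ← ENNReal.rpow_add _ _ h0 ENNReal.ofReal_ne_top]
        ring_nf
    _ = _ := ofReal_two_zpow_neg_rpow k _

theorem tsum_le_of_two_sided_geometric (T : ℤ → ℝ≥0∞) (k : ℤ) (c d : ℝ) (A : ℝ≥0∞)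
    (h_ge : ∀ j, k ≤ j → T j ≤ (2 : ℝ≥0∞) ^ (-j * c) * A)
    (h_lt : ∀ j, j < k → T j ≤ (2 : ℝ≥0∞) ^ (-j * d)) :
    ∑' j, T j ≤ (1 - (2 : ℝ≥0∞) ^ (-c))⁻¹ * ((2 : ℝ≥0∞) ^ (-k * c) * A) +
      (2 : ℝ≥0∞) ^ d * (1 - (2 : ℝ≥0∞) ^ d)⁻¹ * (2 : ℝ≥0∞) ^ (-k * d) := by
  have h_up : ∀ i : ℕ, T (i + k) ≤ (2 : ℝ≥0∞) ^ (-k * c) * A * ((2 : ℝ≥0∞) ^ (-c)) ^ i := by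
    intro i
    refine (h_ge _ (by omega)).trans_eq ?_
    rw [mul_right_comm, ← ENNReal.rpow_natCast, ← ENNReal.rpow_mul,
      ← ENNReal.rpow_add _ _ two_ne_zero ofNat_ne_top]
    congr 2
    push_cast
    ring
  have h_down : ∀ i : ℕ, T (-(i + 1) + k) ≤
      (2 : ℝ≥0∞) ^ (-k * d) * ((2 : ℝ≥0∞) ^ d) ^ (i + 1) := by
    intro i
    refine (h_lt _ (by omega)).trans_eq ?_
    rw [← ENNReal.rpow_natCast, ← ENNReal.rpow_mul,
      ← ENNReal.rpow_add _ _ two_ne_zero ofNat_ne_top]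
    congr 1
    push_cast
    ring
  rw [← (Equiv.addRight k).tsum_eq, tsum_of_nat_of_neg_add_one ENNReal.summable ENNReal.summable]
  gcongr
  · calc ∑' i : ℕ, T (i + k)
        ≤ ∑' i : ℕ, (2 : ℝ≥0∞) ^ (-k * c) * A * ((2 : ℝ≥0∞) ^ (-c)) ^ i :=
          ENNReal.tsum_le_tsum h_up
      _ = _ := by rw [ENNReal.tsum_mul_left, ENNReal.tsum_geometric, mul_comm]
  · calc ∑' i : ℕ, T (-(i + 1) + k)
        ≤ ∑' i : ℕ, (2 : ℝ≥0∞) ^ (-k * d) * ((2 : ℝ≥0∞) ^ d) ^ (i + 1) :=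
          ENNReal.tsum_le_tsum h_down
      _ = _ := by rw [ENNReal.tsum_mul_left, ENNReal.tsum_geometric_add_one, mul_comm]

theorem statement8_general (m : ℕ)
    (P : Fin m → ℝ) (hP : ∀ j, 1 < P j) (p p0 α β : ℝ)
    (hp : 1 / p = ∑ j, 1 / P j)
    (hβ : 0 < β) (hβα : β < α)
    (hp0 : 0 < p0) (hp0n : p0 < n / α) :
    ∃ C : ℝ≥0∞, 0 < C ∧ C < ∞ ∧
      ∀ f : Fin m → (Fin n → ℝ) → ℝ, prodMorreyNorm P p p0 f = 1 →
        ∀ (k : ℤ) (mv : Fin n → ℤ) (x : Fin n → ℝ), x ∈ dyadicCube k mv →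
          dyadicFracIntegral α f x ≤
            C * (ENNReal.ofReal ((2 : ℝ) ^ (-k)) ^ (α - β) * dyadicFracMaximal β f x +
              ENNReal.ofReal ((2 : ℝ) ^ (-k)) ^ (α - n / p0)) := by
  have hd : α - n / p0 < 0 := by
    rw [sub_neg, lt_div_iff₀ hp0, mul_comm]
    exact (lt_div_iff₀ (hβ.trans hβα)).mp hp0n
  have hr_up : (2 : ℝ≥0∞) ^ (-(α - β)) < 1 :=
    ENNReal.rpow_lt_one_of_one_lt_of_neg one_lt_two (by linarith)
  have hr_down : (2 : ℝ≥0∞) ^ (α - n / p0) < 1 :=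
    ENNReal.rpow_lt_one_of_one_lt_of_neg one_lt_two hd
  set C_up := (1 - (2 : ℝ≥0∞) ^ (-(α - β)))⁻¹
  set C_down := (2 : ℝ≥0∞) ^ (α - n / p0) * (1 - (2 : ℝ≥0∞) ^ (α - n / p0))⁻¹
  have hC_up : 0 < C_up := ENNReal.inv_pos.mpr (ENNReal.sub_ne_top ENNReal.one_ne_top)
  have hC_up' : C_up < ⊤ := ENNReal.inv_lt_top.mpr (tsub_pos_of_lt hr_up)
  have hC_down : C_down < ⊤ :=
    ENNReal.mul_lt_top (hr_down.trans ENNReal.one_lt_top)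
      (ENNReal.inv_lt_top.mpr (tsub_pos_of_lt hr_down))
  refine ⟨C_up + C_down, hC_up.trans_le le_self_add, ENNReal.add_lt_top.mpr ⟨hC_up', hC_down⟩,
    fun f hf k _ x _ => ?_⟩
  rw [dyadicFracIntegral_eq_tsum, ofReal_two_zpow_neg_rpow, ofReal_two_zpow_neg_rpow, mul_add]
  refine (tsum_le_of_two_sided_geometric _ k _ _ (dyadicFracMaximal β f x) (fun j _ => ?_)
    (fun j _ => dyadicTerm_le_of_prodMorreyNorm_le_one hP hp α hf.le j _)).trans
    (add_le_add (mul_le_mul_left le_self_add _) (mul_le_mul_left le_add_self _))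
  rw [dyadicTerm_eq_two_rpow_mul_dyadicTerm α β]
  exact mul_le_mul_right (dyadicTerm_le_dyadicFracMaximal β f (mem_dyadicCube_dyadicIndex x j)) _

theorem statement8 (hn : 0 < n) (m : ℕ) (hm : 0 < m)
    (P : Fin m → ℝ) (hP : ∀ j, 1 < P j) (p p0 α β : ℝ)
    (hp : 1 / p = ∑ j, 1 / P j)
    (hβ : 0 < β) (hβα : β < α) (hα : α < (m : ℝ) * n)
    (hp0 : 0 < p0) (hp0n : p0 < n / α) :
    ∃ C : ℝ≥0∞, 0 < C ∧ C < ∞ ∧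
      ∀ f : Fin m → (Fin n → ℝ) → ℝ, prodMorreyNorm P p p0 f = 1 →
        ∀ (k : ℤ) (mv : Fin n → ℤ) (x : Fin n → ℝ), x ∈ dyadicCube k mv →
          dyadicFracIntegral α f x ≤
            C * (ENNReal.ofReal ((2 : ℝ) ^ (-k)) ^ (α - β) * dyadicFracMaximal β f x +
              ENNReal.ofReal ((2 : ℝ) ^ (-k)) ^ (α - n / p0)) :=
  statement8_general m P hP p p0 α β hp hβ hβα hp0 hp0n
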